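/- Let N ≥ 1 and let L, L' ∈ LR^N(ℝ²) be such that there exists a continuous path γ : [0,1] → LR^N(ℝ²) with γ(0) = L and γ(1) = L'. Then Car(L) = Car(L'). -/

import Mathlib

open Real Set
open scoped Classical

noncomputable section

abbrev Pt : Type := EuclideanSpace ℝ (Fin 2)

noncomputable def pt (x y : ℝ) : Pt := (WithLp.equiv 2 (Fin 2 → ℝ)).symm ![x, y]

def dot (u v : Pt) : ℝ := u 0 * v 0 + u 1 * v 1

noncomputable def nvec (θ : Real.Angle) : Pt := pt (-θ.sin) θ.cos

noncomputable def dirvec (θ : Real.Angle) : Pt := pt θ.cos θ.sin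

noncomputable def angleOf (v : Pt) : Real.Angle := ((Complex.arg ⟨v 0, v 1⟩ : ℝ) : Real.Angle)

/-- The space of `N`-polygonal chains `(ℝ²)^{N+2}`. -/
abbrev Chain (N : ℕ) := Fin (N + 2) → Pt

/-- Access the `i`-th point of a chain (junk value `0` out of range). -/
def cg {N : ℕ} (c : Chain N) (i : ℕ) : Pt := if h : i < N + 2 then c ⟨i, h⟩ else 0

/-- The `j`-th ray of a chain: `R_0 = (c_0,c_1]`, `R_j = [c_j, c_{j+1}]`. -/
def ray {N : ℕ} (c : Chain N) (j : ℕ) : Set Pt :=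
  if j = 0 then segment ℝ (cg c 0) (cg c 1) \ {cg c 0}
  else segment ℝ (cg c j) (cg c (j + 1))

def Obscured {N : ℕ} (c : Chain N) : Prop :=
  cg c 0 = cg c 1 ∨
    ∃ j k : ℕ, j ≤ N ∧ 1 ≤ k ∧ k ≤ N + 1 ∧ k ≠ j ∧ k ≠ j + 1 ∧ cg c k ∈ ray c j

def Grazing {N : ℕ} (c : Chain N) : Prop :=
  ∃ i : ℕ, 1 ≤ i ∧ i ≤ N ∧ cg c i ∈ openSegment ℝ (cg c (i - 1)) (cg c (i + 1))

/-- Obscuration-free, non-grazing chains. -/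
def LO (N : ℕ) : Set (Chain N) := {c | ¬Obscured c ∧ ¬Grazing c}

/-- Access the angle of the `j`-th mirror, `1 ≤ j ≤ N` (junk out of range). -/
def θg {N : ℕ} (θ : Fin N → Real.Angle) (j : ℕ) : Real.Angle :=
  if h : j - 1 < N then θ ⟨j - 1, h⟩ else 0

/-- Reflexion condition: at each mirror both adjacent dot products with `n(θ_j)`
are nonzero and of the same sign. -/
def IsReflexive {N : ℕ} (c : Chain N) (θ : Fin N → Real.Angle) : Prop :=
  ∀ j : ℕ, 1 ≤ j → j ≤ N →
    0 < dot (cg c (j + 1) - cg c j) (nvec (θg θ j)) *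
        dot (cg c (j - 1) - cg c j) (nvec (θg θ j))

abbrev RChain (N : ℕ) := Chain N × (Fin N → Real.Angle)

/-- The space of reflexive polygonal chains. -/
def LR (N : ℕ) : Set (RChain N) := {L | L.1 ∈ LO N ∧ IsReflexive L.1 L.2}

/-- The open arc `α + ε·(0,π)` in `ℝ/2πℤ`. -/
def arc (α : Real.Angle) (ε : ℤ) : Set Real.Angle :=
  {β | ∃ s : ℝ, 0 < s ∧ s < π ∧ β = α + (((ε : ℝ) * s : ℝ) : Real.Angle)}

/-- Positive orientation set of the `j`-th mirror. -/
def APlus {N : ℕ} (c : Chain N) (j : ℕ) : Set Real.Angle :=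
  arc (angleOf (cg c j - cg c (j - 1))) ((-1) ^ j) ∩
    arc (angleOf (cg c j - cg c (j + 1))) ((-1) ^ j)

/-- Negative orientation set of the `j`-th mirror. -/
def AMinus {N : ℕ} (c : Chain N) (j : ℕ) : Set Real.Angle :=
  arc (angleOf (cg c j - cg c (j - 1))) ((-1) ^ (j + 1)) ∩
    arc (angleOf (cg c j - cg c (j + 1))) ((-1) ^ (j + 1))

/-- The characteristic: index `j : Fin N` corresponds to the `(j+1)`-st mirror. -/
noncomputable def Car {N : ℕ} (L : RChain N) : Fin N → ℤ :=
  fun j => if θg L.2 (j.1 + 1) ∈ APlus L.1 (j.1 + 1) then 1 else -1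

abbrev Beam (N : ℕ) := Chain N × Chain N

def IsPrimaryBeam {N : ℕ} (F : Beam N) : Prop :=
  (∀ k : ℕ, 1 ≤ k → k ≤ N → cg F.1 k ≠ cg F.2 k) ∧
  cg F.1 0 = pt (-1) 0 ∧ cg F.2 0 = pt (-1) 0 ∧
  cg F.1 (N + 1) = cg F.2 (N + 1) ∧
  midpoint ℝ (cg F.1 1) (cg F.2 1) = pt 0 0

def lineThrough (p q : Pt) : Set Pt := {x | ∃ u : ℝ, x = p + u • (q - p)}

noncomputable def pickPt (S : Set Pt) : Pt := if h : S.Nonempty then h.choose else 0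

noncomputable def pickR (S : Set ℝ) : ℝ := if h : S.Nonempty then h.choose else 0

/-- `impact F t k` is the `(k+1)`-st impact point `P_{k+1}^t` of the `t`-polygonal chain. -/
noncomputable def impact {N : ℕ} (F : Beam N) (t : ℝ) : ℕ → Pt
  | 0 => (1 - t) • cg F.1 1 + t • cg F.2 1
  | k + 1 =>
    let i := k + 2
    let prev := impact F t k
    if (lineThrough (cg F.1 (i - 1)) (cg F.1 i) ∩
        lineThrough (cg F.2 (i - 1)) (cg F.2 i)).Nonempty then
      pickPt (lineThrough prev
          (pickPt (lineThrough (cg F.1 (i - 1)) (cg F.1 i) ∩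
            lineThrough (cg F.2 (i - 1)) (cg F.2 i))) ∩
        segment ℝ (cg F.1 i) (cg F.2 i))
    else
      (1 - pickR {l : ℝ | prev = (1 - l) • cg F.1 (i - 1) + l • cg F.2 (i - 1)}) • cg F.1 i +
        pickR {l : ℝ | prev = (1 - l) • cg F.1 (i - 1) + l • cg F.2 (i - 1)} • cg F.2 i

/-- The `t`-polygonal chain `P_t` of a (primary) beam. -/
noncomputable def tChain {N : ℕ} (F : Beam N) (t : ℝ) : Chain N :=
  fun i => if (i : ℕ) = 0 then impact F t 0 + pt (-1) 0 else impact F t ((i : ℕ) - 1)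

/-- The `k`-th mirror `S_k = [a_k, b_k]` of a beam. -/
def mirror {N : ℕ} (F : Beam N) (k : ℕ) : Set Pt := segment ℝ (cg F.1 k) (cg F.2 k)

def NonObscuration {N : ℕ} (F : Beam N) : Prop :=
  ∀ j : ℕ, j ≤ N → ∀ t ∈ Icc (0 : ℝ) 1, ∀ k : ℕ,
    1 ≤ k → k ≤ N + 1 → k ≠ j → k ≠ j + 1 → ray (tChain F t) j ∩ mirror F k = ∅

/-- Four reals are nonzero and of the same sign. -/
def SameSign₄ (x y z w : ℝ) : Prop := 0 < x * y ∧ 0 < x * z ∧ 0 < x * w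

/-- A unit normal vector to the direction `u`. -/
noncomputable def normalOf (u : Pt) : Pt := ‖u‖⁻¹ • pt (-u 1) (u 0)

def ReflexionCond {N : ℕ} (F : Beam N) : Prop :=
  ∀ i : ℕ, 1 ≤ i → i ≤ N →
    SameSign₄
      (dot (cg F.1 (i - 1) - cg F.1 i) (normalOf (cg F.2 i - cg F.1 i)))
      (dot (cg F.2 (i - 1) - cg F.2 i) (normalOf (cg F.2 i - cg F.1 i)))
      (dot (cg F.1 (i + 1) - cg F.1 i) (normalOf (cg F.2 i - cg F.1 i)))
      (dot (cg F.2 (i + 1) - cg F.2 i) (normalOf (cg F.2 i - cg F.1 i)))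

/-- The space of `N`-beams. -/
def Faisc (N : ℕ) : Set (Beam N) :=
  {F | IsPrimaryBeam F ∧ NonObscuration F ∧ ReflexionCond F}

/-- The centered polygonal chain `M(F) = P_{1/2}`. -/
noncomputable def MF {N : ℕ} (F : Beam N) : Chain N := tChain F (1 / 2)

/-- The reflexive polygonal chain induced by a beam. -/
noncomputable def MR {N : ℕ} (F : Beam N) : RChain N :=
  (MF F, fun j => angleOf (cg F.1 (j.1 + 1) - cg F.2 (j.1 + 1)))

/-- The characteristic of a beam. -/
noncomputable def CarF {N : ℕ} (F : Beam N) : Fin N → ℤ := Car (MR F)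

/-- The pair of polygonal chains `P_l(L)` built from a reflexive chain and mirror
half-lengths `la, lb` (indexed by `1 ≤ j ≤ N`). -/
noncomputable def Pl {N : ℕ} (L : RChain N) (la lb : ℕ → ℝ) : Beam N :=
  (fun i => if 1 ≤ (i : ℕ) ∧ (i : ℕ) ≤ N
      then L.1 i + la (i : ℕ) • dirvec (θg L.2 (i : ℕ)) else L.1 i,
   fun i => if 1 ≤ (i : ℕ) ∧ (i : ℕ) ≤ N
      then L.1 i - lb (i : ℕ) • dirvec (θg L.2 (i : ℕ)) else L.1 i)

/-- Minimal mirror-to-mirror distance of a reflexive chain. -/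
noncomputable def dR {N : ℕ} (L : RChain N) : ℝ :=
  sInf {r | ∃ i : ℕ, 1 ≤ i ∧ i ≤ N ∧
    r = min |dot (cg L.1 (i - 1) - cg L.1 i) (nvec (θg L.2 i))|
          |dot (cg L.1 (i + 1) - cg L.1 i) (nvec (θg L.2 i))|}

/-- Minimal distance from the non-adjacent mirrors to the rays. -/
noncomputable def dO {N : ℕ} (L : RChain N) : ℝ :=
  sInf {r | ∃ j k : ℕ, j ≤ N ∧ 1 ≤ k ∧ k ≤ N + 1 ∧ k ≠ j ∧ k ≠ j + 1 ∧
    r = Metric.infDist (cg L.1 k) (ray L.1 j)}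

/-- `K = max_{1 ≤ j ≤ N} max (la j) (lb j)`. -/
noncomputable def Kmax (N : ℕ) (la lb : ℕ → ℝ) : ℝ :=
  sSup {r | ∃ j : ℕ, 1 ≤ j ∧ j ≤ N ∧ r = max (la j) (lb j)}

/-- The subbeam `F_μ` of a beam. -/
noncomputable def subBeam {N : ℕ} (F : Beam N) (μ : ℝ) : Beam N :=
  (fun i => if (i : ℕ) = 0 then pt (-1) 0 else tChain F ((1 - μ) / 2) i,
   fun i => if (i : ℕ) = 0 then pt (-1) 0 else tChain F ((1 + μ) / 2) i)
section AuxStatement2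

@[simp] lemma pt_apply_zero (x y : ℝ) : pt x y 0 = x := rfl

@[simp] lemma pt_apply_one (x y : ℝ) : pt x y 1 = y := rfl

lemma dot_sub_swap (a b c : Pt) : dot (a - b) c = -(dot (b - a) c) := by
  simp only [dot, PiLp.sub_apply]; ring

lemma sin_sub_angleOf (v : Pt) (hv : v ≠ 0) (θ : Real.Angle) :
    (θ - angleOf v).sin * ‖v‖ = -(dot v (nvec θ)) := by
  induction θ using Real.Angle.induction_on with
  | h b =>
    set z : ℂ := ⟨v 0, v 1⟩ with hz_def
    have hz : z ≠ 0 := by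
      intro hz0
      apply hv
      have h0 : v 0 = 0 := congrArg Complex.re hz0
      have h1 : v 1 = 0 := congrArg Complex.im hz0
      ext i
      fin_cases i
      · exact h0
      · exact h1
    have habs : ‖z‖ = ‖v‖ := by
      rw [EuclideanSpace.norm_eq, Complex.norm_def, Complex.normSq_apply]
      congr 1
      have hre : z.re = v 0 := rfl
      have him : z.im = v 1 := rfl
      rw [hre, him]
      simp [Fin.sum_univ_two, Real.norm_eq_abs, sq_abs]
      ring
    have harg : angleOf v = ((Complex.arg z : ℝ) : Real.Angle) := rfl
    have hne : ‖v‖ ≠ 0 := norm_ne_zero_iff.mpr hv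
    rw [harg, ← Real.Angle.coe_sub, Real.Angle.sin_coe, Real.sin_sub,
      Complex.cos_arg hz, Complex.sin_arg, habs]
    have hre : z.re = v 0 := rfl
    have him : z.im = v 1 := rfl
    rw [hre, him]
    simp only [dot, nvec, pt_apply_zero, pt_apply_one, Real.Angle.sin_coe,
      Real.Angle.cos_coe]
    field_simp
    ring

lemma mem_arc_iff {α β : Real.Angle} {ε : ℤ} (hε : ε = 1 ∨ ε = -1) :
    β ∈ arc α ε ↔ 0 < (ε : ℝ) * (β - α).sin := by
  constructor
  · rintro ⟨s, hs0, hsπ, rfl⟩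
    have h : (α + (((ε : ℝ) * s : ℝ) : Real.Angle) - α) = (((ε : ℝ) * s : ℝ) : Real.Angle) := by
      abel
    rw [h, Real.Angle.sin_coe]
    have hsp := Real.sin_pos_of_pos_of_lt_pi hs0 hsπ
    rcases hε with rfl | rfl
    · push_cast
      simpa using hsp
    · push_cast
      simp only [neg_one_mul, Real.sin_neg]
      linarith
  · intro hpos
    have hsin : Real.sin (β - α).toReal = (β - α).sin := Real.Angle.sin_toReal _
    have hlt : -π < (β - α).toReal := Real.Angle.neg_pi_lt_toReal _
    have hle : (β - α).toReal ≤ π := Real.Angle.toReal_le_pi _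
    have hβ : β = α + ((β - α).toReal : Real.Angle) := by
      rw [Real.Angle.coe_toReal]; abel
    set t := (β - α).toReal with ht_def
    rcases hε with rfl | rfl
    · have hsp : 0 < Real.sin t := by
        rw [hsin]; push_cast at hpos; linarith
      have ht0 : 0 < t := by
        by_contra hc
        push_neg at hc
        nlinarith [Real.sin_nonpos_of_nonpos_of_neg_pi_le hc hlt.le]
      have htπ : t < π := lt_of_le_of_ne hle (fun hteq => by rw [hteq] at hsp; simp at hsp)
      refine ⟨t, ht0, htπ, ?_⟩
      rw [hβ]; push_cast; norm_num
    · have hsn : Real.sin t < 0 := by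
        rw [hsin]; push_cast at hpos; linarith
      have ht0 : t < 0 := by
        by_contra hc
        push_neg at hc
        nlinarith [Real.sin_nonneg_of_nonneg_of_le_pi hc hle]
      refine ⟨-t, by linarith, by linarith, ?_⟩
      rw [hβ]; push_cast; norm_num

lemma mem_APlus_iff {N : ℕ} {L : RChain N} (hL : L ∈ LR N) {m : ℕ} (h1 : 1 ≤ m) (h2 : m ≤ N) :
    θg L.2 m ∈ APlus L.1 m ↔
      0 < (-1 : ℝ) ^ m * dot (cg L.1 (m - 1) - cg L.1 m) (nvec (θg L.2 m)) := by
  have hR := hL.2 m h1 h2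
  have hD1 : dot (cg L.1 (m - 1) - cg L.1 m) (nvec (θg L.2 m)) ≠ 0 := by
    intro h0; rw [h0, mul_zero] at hR; exact lt_irrefl 0 hR
  have hD2 : dot (cg L.1 (m + 1) - cg L.1 m) (nvec (θg L.2 m)) ≠ 0 := by
    intro h0; rw [h0, zero_mul] at hR; exact lt_irrefl 0 hR
  have hv1 : cg L.1 m - cg L.1 (m - 1) ≠ 0 := by
    intro h0
    apply hD1
    have hz : cg L.1 (m - 1) - cg L.1 m = 0 := by rw [← neg_sub, h0, neg_zero]
    rw [hz]
    simp [dot, PiLp.zero_apply]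
  have hv2 : cg L.1 m - cg L.1 (m + 1) ≠ 0 := by
    intro h0
    apply hD2
    have hz : cg L.1 (m + 1) - cg L.1 m = 0 := by rw [← neg_sub, h0, neg_zero]
    rw [hz]
    simp [dot, PiLp.zero_apply]
  have hε : ((-1 : ℤ) ^ m = 1 ∨ (-1 : ℤ) ^ m = -1) :=
    (Nat.even_or_odd m).imp Even.neg_one_pow Odd.neg_one_pow
  have hεR : ((-1 : ℝ) ^ m = 1 ∨ (-1 : ℝ) ^ m = -1) :=
    (Nat.even_or_odd m).imp Even.neg_one_pow Odd.neg_one_pow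
  have hcast : ((((-1 : ℤ) ^ m : ℤ)) : ℝ) = (-1 : ℝ) ^ m := by push_cast; ring
  have hnorm1 : 0 < ‖cg L.1 m - cg L.1 (m - 1)‖ := norm_pos_iff.mpr hv1
  have hnorm2 : 0 < ‖cg L.1 m - cg L.1 (m + 1)‖ := norm_pos_iff.mpr hv2
  have e1 : (θg L.2 m - angleOf (cg L.1 m - cg L.1 (m - 1))).sin *
      ‖cg L.1 m - cg L.1 (m - 1)‖ =
      dot (cg L.1 (m - 1) - cg L.1 m) (nvec (θg L.2 m)) := by
    rw [sin_sub_angleOf _ hv1, dot_sub_swap, neg_neg]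
  have e2 : (θg L.2 m - angleOf (cg L.1 m - cg L.1 (m + 1))).sin *
      ‖cg L.1 m - cg L.1 (m + 1)‖ =
      dot (cg L.1 (m + 1) - cg L.1 m) (nvec (θg L.2 m)) := by
    rw [sin_sub_angleOf _ hv2, dot_sub_swap, neg_neg]
  have harc1 : θg L.2 m ∈ arc (angleOf (cg L.1 m - cg L.1 (m - 1))) ((-1) ^ m) ↔
      0 < (-1 : ℝ) ^ m * dot (cg L.1 (m - 1) - cg L.1 m) (nvec (θg L.2 m)) := by
    rw [mem_arc_iff hε, hcast]
    rcases hεR with hε1 | hε1 <;> rw [hε1] <;>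
      (constructor <;> intro hp <;> nlinarith [e1, hnorm1])
  have harc2 : θg L.2 m ∈ arc (angleOf (cg L.1 m - cg L.1 (m + 1))) ((-1) ^ m) ↔
      0 < (-1 : ℝ) ^ m * dot (cg L.1 (m + 1) - cg L.1 m) (nvec (θg L.2 m)) := by
    rw [mem_arc_iff hε, hcast]
    rcases hεR with hε1 | hε1 <;> rw [hε1] <;>
      (constructor <;> intro hp <;> nlinarith [e2, hnorm2])
  have hmem : θg L.2 m ∈ APlus L.1 m ↔
      (0 < (-1 : ℝ) ^ m * dot (cg L.1 (m - 1) - cg L.1 m) (nvec (θg L.2 m)) ∧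
       0 < (-1 : ℝ) ^ m * dot (cg L.1 (m + 1) - cg L.1 m) (nvec (θg L.2 m))) := by
    rw [APlus, Set.mem_inter_iff, harc1, harc2]
  rw [hmem]
  constructor
  · exact fun h0 => h0.1
  · intro h0
    refine ⟨h0, ?_⟩
    rcases hεR with hε1 | hε1 <;> rw [hε1] at h0 ⊢ <;> nlinarith

lemma continuous_D1 {N : ℕ} {m : ℕ} (h1 : 1 ≤ m) (h2 : m ≤ N) :
    Continuous (fun L : RChain N => dot (cg L.1 (m - 1) - cg L.1 m) (nvec (θg L.2 m))) := by
  have hk1 : m - 1 < N + 2 := by omega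
  have hk2 : m < N + 2 := by omega
  have hθ : m - 1 < N := by omega
  have heq : (fun L : RChain N => dot (cg L.1 (m - 1) - cg L.1 m) (nvec (θg L.2 m))) =
      fun L : RChain N =>
        (L.1 ⟨m - 1, hk1⟩ 0 - L.1 ⟨m, hk2⟩ 0) * (-(L.2 ⟨m - 1, hθ⟩).sin) +
        (L.1 ⟨m - 1, hk1⟩ 1 - L.1 ⟨m, hk2⟩ 1) * (L.2 ⟨m - 1, hθ⟩).cos := by
    funext L
    simp [dot, cg, θg, nvec, hk1, hk2, hθ, PiLp.sub_apply]
  rw [heq]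
  have hc : ∀ (k : Fin (N + 2)) (i : Fin 2), Continuous fun L : RChain N => L.1 k i :=
    fun k i => (EuclideanSpace.proj (𝕜 := ℝ) i).continuous.comp
      ((continuous_apply k).comp continuous_fst)
  have hA : Continuous fun L : RChain N => L.2 ⟨m - 1, hθ⟩ :=
    (continuous_apply _).comp continuous_snd
  exact (((hc _ 0).sub (hc _ 0)).mul (Real.Angle.continuous_sin.comp hA).neg).add
    (((hc _ 1).sub (hc _ 1)).mul (Real.Angle.continuous_cos.comp hA))

lemma sign_iff_aux {x y c : ℝ} (hx : x ≠ 0) (hy : y ≠ 0) (hc : c = 1 ∨ c = -1)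
    (h : 0 < x ↔ 0 < y) : (0 < c * x ↔ 0 < c * y) := by
  rcases hc with rfl | rfl <;>
    rcases hx.lt_or_gt with h1 | h1 <;> rcases hy.lt_or_gt with h2 | h2 <;>
    first
      | exact absurd (h.2 h2) (by linarith)
      | exact absurd (h.1 h1) (by linarith)
      | (constructor <;> intro hp <;> nlinarith)

end AuxStatement2

/-- the characteristic is a topological invariant of `LR^N`. -/
theorem statement2 (N : ℕ) (hN : 1 ≤ N) (L L' : RChain N)
    (hL : L ∈ LR N) (hL' : L' ∈ LR N) (h : JoinedIn (LR N) L L') :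
    Car L = Car L' := by
  obtain ⟨γ, hγ⟩ := h
  funext j
  simp only [Car]
  set m := j.1 + 1 with hm
  have h1 : 1 ≤ m := by omega
  have h2 : m ≤ N := by omega
  set f : ℝ → ℝ := fun t =>
    dot (cg (γ.extend t).1 (m - 1) - cg (γ.extend t).1 m) (nvec (θg (γ.extend t).2 m)) with hf
  have hfc : Continuous f := (continuous_D1 h1 h2).comp γ.continuous_extend
  have hmem : ∀ t : ℝ, γ.extend t ∈ LR N := fun t => hγ _
  have hne : ∀ t : ℝ, f t ≠ 0 := by
    intro t h0
    have hR := (hmem t).2 m h1 h2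
    simp only [hf] at h0
    rw [h0, mul_zero] at hR
    exact lt_irrefl 0 hR
  have key : (0 < f 0) ↔ (0 < f 1) := by
    constructor
    · intro hp
      by_contra hq
      have hq' : f 1 < 0 := lt_of_le_of_ne (not_lt.1 hq) (hne 1)
      obtain ⟨t, _, h0⟩ := intermediate_value_Icc' zero_le_one hfc.continuousOn ⟨hq'.le, hp.le⟩
      exact hne t h0
    · intro hp
      by_contra hq
      have hq' : f 0 < 0 := lt_of_le_of_ne (not_lt.1 hq) (hne 0)
      obtain ⟨t, _, h0⟩ := intermediate_value_Icc zero_le_one hfc.continuousOn ⟨hq'.le, hp.le⟩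
      exact hne t h0
  have hf0 : f 0 = dot (cg L.1 (m - 1) - cg L.1 m) (nvec (θg L.2 m)) := by
    simp only [hf, Path.extend_zero]
  have hf1 : f 1 = dot (cg L'.1 (m - 1) - cg L'.1 m) (nvec (θg L'.2 m)) := by
    simp only [hf, Path.extend_one]
  have hεR : ((-1 : ℝ) ^ m = 1 ∨ (-1 : ℝ) ^ m = -1) :=
    (Nat.even_or_odd m).imp Even.neg_one_pow Odd.neg_one_pow
  have hne0 : f 0 ≠ 0 := hne 0
  have hne1 : f 1 ≠ 0 := hne 1
  rw [hf0] at hne0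
  rw [hf1] at hne1
  rw [hf0, hf1] at key
  have hiff : (θg L.2 m ∈ APlus L.1 m) ↔ (θg L'.2 m ∈ APlus L'.1 m) := by
    rw [mem_APlus_iff hL h1 h2, mem_APlus_iff hL' h1 h2]
    exact sign_iff_aux hne0 hne1 hεR key
  rw [if_congr hiff rfl rfl]
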